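/- For all integers k ≥ 0 and all n with 0 ≤ n ≤ N, the k-th power of the second Kravchuk derivation satisfies D_{K2}^k(x_n) = ∑_{i=0}^{n−k} (k!/(n−i)!) · s(n−i, k) · x_i, the sum being empty when k > n. -/
import Mathlib

/-- The variable `x_i` of `ℚ[x_0,…,x_N]` (for `i ≤ N`). -/
noncomputable def Xv (N : ℕ) (i : ℕ) : MvPolynomial (Fin (N + 1)) ℚ :=
  if h : i ≤ N then MvPolynomial.X ⟨i, Nat.lt_succ_of_le h⟩ else 0

/-- The second Kravchuk derivation: `D_{K2}(x_0)=0`,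
`D_{K2}(x_m)=∑_{i=0}^{m-1} ((-1)^{m+1+i}/(m-i)) x_i`. -/
noncomputable def DK2 (N : ℕ) :
    Derivation ℚ (MvPolynomial (Fin (N + 1)) ℚ) (MvPolynomial (Fin (N + 1)) ℚ) :=
  MvPolynomial.mkDerivation ℚ fun m : Fin (N + 1) =>
    ∑ i ∈ Finset.range (m : ℕ),
      MvPolynomial.C ((-1 : ℚ) ^ ((m : ℕ) + 1 + i) / (((m : ℕ) : ℚ) - (i : ℚ))) * Xv N i

/-- Signed Stirling numbers of the first kind: `t(t-1)⋯(t-m+1) = ∑_k s(m,k) t^k`. -/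
noncomputable def stirling1 (m k : ℕ) : ℚ := (descPochhammer ℚ m).coeff k

open Finset Polynomial

noncomputable def ee (m j : ℕ) : ℚ :=
  (-1 : ℚ) ^ (m + 1 + j) / ((m : ℚ) - (j : ℚ)) * ((Nat.factorial m : ℚ) / (Nat.factorial j : ℚ))

lemma neg_one_pow_two_mul' (a : ℕ) : (-1 : ℚ) ^ (a * 2) = 1 := by
  rw [mul_comm, pow_mul]; norm_num

lemma ee_step0 (m : ℕ) (hm : m ≠ 0) : ee (m+1) 0 = -(ee m 0 * ((m:ℚ) - 0)) := by
  have h1 : ((m:ℚ)) ≠ 0 := Nat.cast_ne_zero.mpr hm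
  have h2 : ((m:ℚ)) + 1 ≠ 0 := by positivity
  simp only [ee, Nat.factorial_succ, Nat.factorial_zero, Nat.cast_mul, Nat.cast_add,
    Nat.cast_one, Nat.cast_zero]
  field_simp
  ring_nf

lemma ee_steptop (j' : ℕ) : ee (j'+1+1) (j'+1) = ee (j'+1) j' + 1 := by
  have h0 : (Nat.factorial j' : ℚ) ≠ 0 := Nat.cast_ne_zero.mpr (Nat.factorial_ne_zero j')
  simp only [ee, Nat.factorial_succ, Nat.cast_mul, Nat.cast_add, Nat.cast_one]
  field_simp
  ring_nf
  simp only [neg_one_pow_two_mul']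
  ring

lemma ee_stepmid (m j' : ℕ) (h : j' + 1 < m) :
    ee (m+1) (j'+1) = ee m j' - ee m (j'+1) * ((m:ℚ) - ((j'+1:ℕ) : ℚ)) := by
  have h0 : (Nat.factorial j' : ℚ) ≠ 0 := Nat.cast_ne_zero.mpr (Nat.factorial_ne_zero j')
  have h1 : (m:ℚ) - (j'+1) ≠ 0 := by
    have : (j'+1 : ℚ) < m := by exact_mod_cast h
    linarith
  have h2 : (m:ℚ) - j' ≠ 0 := by
    have : (j'+1:ℚ) ≤ m := by exact_mod_cast h.le
    intro hc; nlinarith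
  have h3 : (m:ℚ) + 1 - (j'+1) ≠ 0 := by intro hc; apply h2; linarith
  simp only [ee, Nat.factorial_succ, Nat.cast_mul, Nat.cast_add, Nat.cast_one]
  field_simp
  ring_nf

lemma poch_deriv (m : ℕ) :
    Polynomial.derivative (descPochhammer ℚ m)
      = ∑ j ∈ Finset.range m, Polynomial.C (ee m j) * descPochhammer ℚ j := by
  induction m with
  | zero => simp [descPochhammer]
  | succ m ih =>
    have hcast : ∀ a : ℕ, ((a : ℚ[X])) = Polynomial.C (a : ℚ) := by simp
    have expand : ∀ j : ℕ, descPochhammer ℚ j * (X - (m : ℚ[X]))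
        = descPochhammer ℚ (j+1) - Polynomial.C ((m : ℚ) - (j : ℚ)) * descPochhammer ℚ j := by
      intro j
      rw [descPochhammer_succ_right, hcast m, hcast j, map_sub]
      ring
    have lhs_eq : Polynomial.derivative (descPochhammer ℚ (m+1))
        = (∑ j ∈ Finset.range m, Polynomial.C (ee m j) * descPochhammer ℚ (j+1))
          - (∑ j ∈ Finset.range m,
              Polynomial.C (ee m j * ((m : ℚ) - (j : ℚ))) * descPochhammer ℚ j)
          + descPochhammer ℚ m := by
      rw [descPochhammer_succ_right, derivative_mul, ih, derivative_sub, derivative_X]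
      simp only [derivative_natCast, sub_zero, mul_one]
      rw [Finset.sum_mul, ← Finset.sum_sub_distrib]
      congr 1
      apply Finset.sum_congr rfl
      intro j _
      rw [mul_assoc, expand j, map_mul]
      ring
    rw [lhs_eq]
    have h1 : (∑ j ∈ Finset.range m, Polynomial.C (ee m j) * descPochhammer ℚ (j+1))
        = ∑ j ∈ Finset.range (m+1),
            (if j = 0 then 0 else Polynomial.C (ee m (j-1)) * descPochhammer ℚ j) := by
      rw [Finset.sum_range_succ']
      simp
    have h2 : (∑ j ∈ Finset.range m,
          Polynomial.C (ee m j * ((m : ℚ) - (j : ℚ))) * descPochhammer ℚ j)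
        = ∑ j ∈ Finset.range (m+1),
            Polynomial.C (ee m j * ((m : ℚ) - (j : ℚ))) * descPochhammer ℚ j := by
      rw [Finset.sum_range_succ]
      simp
    have h3 : descPochhammer ℚ m
        = ∑ j ∈ Finset.range (m+1), (if j = m then descPochhammer ℚ m else 0) := by
      rw [Finset.sum_ite_eq' (Finset.range (m+1)) m fun _ => descPochhammer ℚ m]
      simp
    rw [h1, h2]
    conv_lhs => rw [h3]
    rw [← Finset.sum_sub_distrib, ← Finset.sum_add_distrib]
    apply Finset.sum_congr rfl
    intro j hj
    rw [Finset.mem_range] at hj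
    have hjm : j ≤ m := Nat.lt_succ_iff.mp hj
    rcases j with _ | j'
    · rcases Nat.eq_zero_or_pos m with rfl | hm
      · norm_num [ee, descPochhammer]
      · have hm0 : m ≠ 0 := hm.ne'
        simp only [if_pos rfl, if_neg (by omega : ¬ (0 : ℕ) = m), Nat.cast_zero]
        rw [ee_step0 m hm0]
        simp only [map_neg, map_mul]
        push_cast
        ring
    · simp only [if_neg (Nat.succ_ne_zero j'), Nat.add_sub_cancel]
      rcases eq_or_lt_of_le hjm with heq | hlt
      · subst heq
        rw [if_pos rfl, ee_steptop j', map_add, map_one,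
          show ((j'+1:ℕ):ℚ) - ((j'+1:ℕ):ℚ) = 0 from sub_self _, mul_zero, map_zero]
        ring
      · have hlt' : j' + 1 < m := hlt
        simp only [if_neg (by omega : ¬ j' + 1 = m)]
        rw [ee_stepmid m j' hlt', map_sub, map_mul]
        push_cast
        ring

lemma stirling1_eq_zero {m k : ℕ} (h : m < k) : stirling1 m k = 0 :=
  Polynomial.coeff_eq_zero_of_natDegree_lt (by simpa using h)

lemma neg_one_pow_aux (a b : ℕ) : (-1 : ℚ) ^ (2 * b + a) = (-1 : ℚ) ^ a := by
  rw [pow_add, pow_mul]; norm_num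

lemma stirl_rec (m k : ℕ) :
    ((k : ℚ) + 1) * stirling1 m (k+1) = ∑ j ∈ Finset.range m, ee m j * stirling1 j k := by
  have h := congrArg (fun p => Polynomial.coeff p k) (poch_deriv m)
  simp only [Polynomial.coeff_derivative, Polynomial.finset_sum_coeff,
    Polynomial.coeff_C_mul] at h
  simp only [stirling1]
  linear_combination h

lemma key (n k j : ℕ) (hj : j < n) :
    ∑ i ∈ Finset.Ico (j+1) (n+1),
      ((Nat.factorial k : ℚ) / (Nat.factorial (n-i)) * stirling1 (n-i) k)
        * ((-1:ℚ)^(i+1+j) / ((i:ℚ) - (j:ℚ)))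
    = (Nat.factorial (k+1) : ℚ) / (Nat.factorial (n-j)) * stirling1 (n-j) (k+1) := by
  have hm : n + 1 - (j + 1) = n - j := by omega
  rw [Finset.sum_Ico_eq_sum_range, hm]
  have hrhs : (Nat.factorial (k+1) : ℚ) / (Nat.factorial (n-j)) * stirling1 (n-j) (k+1)
      = ∑ t ∈ Finset.range (n-j),
          (Nat.factorial k : ℚ) / (Nat.factorial (n-j)) * (ee (n-j) t * stirling1 t k) := by
    rw [← Finset.mul_sum, ← stirl_rec (n-j) k, Nat.factorial_succ]
    push_cast
    have : (Nat.factorial (n-j) : ℚ) ≠ 0 := Nat.cast_ne_zero.mpr (Nat.factorial_ne_zero _)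
    field_simp
  rw [hrhs, ← Finset.sum_range_reflect (fun t => (Nat.factorial k : ℚ) / (Nat.factorial (n-j))
      * (ee (n-j) t * stirling1 t k)) (n-j)]
  apply Finset.sum_congr rfl
  intro a ha
  rw [Finset.mem_range] at ha
  set b := n - j - 1 - a with hb
  have h1 : n - (j + 1 + a) = b := by omega
  have h2 : n - j = a + b + 1 := by omega
  rw [h1, h2]
  have e1 : j + 1 + a + 1 + j = 2 * (j + 1) + a := by omega
  have e2 : (a + b + 1) + 1 + b = 2 * (b + 1) + a := by omega
  simp only [ee, e1, e2, neg_one_pow_aux]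
  have c1 : ((j + 1 + a : ℕ) : ℚ) - (j : ℚ) = (a : ℚ) + 1 := by push_cast; ring
  have c2 : ((a + b + 1 : ℕ) : ℚ) - (b : ℚ) = (a : ℚ) + 1 := by push_cast; ring
  rw [c1, c2]
  have f1 : (Nat.factorial (a+b+1) : ℚ) ≠ 0 := Nat.cast_ne_zero.mpr (Nat.factorial_ne_zero _)
  have f2 : (Nat.factorial b : ℚ) ≠ 0 := Nat.cast_ne_zero.mpr (Nat.factorial_ne_zero _)
  have f3 : ((a:ℚ) + 1) ≠ 0 := by positivity
  field_simp

lemma DK2_X (N i : ℕ) (hi : i ≤ N) :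
    (DK2 N).toLinearMap (Xv N i)
      = ∑ j ∈ Finset.range i,
          MvPolynomial.C ((-1:ℚ)^(i+1+j) / ((i:ℚ) - (j:ℚ))) * Xv N j := by
  rw [Xv, dif_pos hi]
  show (DK2 N) (MvPolynomial.X _) = _
  rw [DK2, MvPolynomial.mkDerivation_X]

/-- `D_{K2}^k(x_n) = ∑_{i=0}^{n-k} (k!/(n-i)!) s(n-i,k) x_i`
(the sum being empty when `k > n`). -/
theorem DK2_pow_X (N k n : ℕ) (hn : n ≤ N) :
    ((DK2 N).toLinearMap ^ k) (Xv N n)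
      = ∑ i ∈ Finset.range (n + 1 - k),
          MvPolynomial.C (((Nat.factorial k : ℚ) / (Nat.factorial (n - i))) * stirling1 (n - i) k)
            * Xv N i := by
  induction k with
  | zero =>
    simp only [pow_zero, Module.End.one_apply, Nat.sub_zero, Nat.factorial_zero]
    rw [Finset.sum_range_succ, Finset.sum_eq_zero, zero_add, Nat.sub_self]
    · simp [stirling1, descPochhammer]
    · intro i hi
      rw [Finset.mem_range] at hi
      have : stirling1 (n - i) 0 = 0 := by
        rw [stirling1, Polynomial.coeff_zero_eq_eval_zero, descPochhammer_eval_zero,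
          if_neg (by omega : ¬ n - i = 0)]
      rw [this, mul_zero, map_zero, zero_mul]
  | succ k ih =>
    rw [pow_succ', Module.End.mul_apply, ih, map_sum]
    have step : ∀ i ∈ Finset.range (n + 1 - k),
        (DK2 N).toLinearMap
          (MvPolynomial.C ((Nat.factorial k : ℚ) / (Nat.factorial (n - i)) * stirling1 (n - i) k)
            * Xv N i)
        = ∑ j ∈ Finset.range i,
            MvPolynomial.C
              (((Nat.factorial k : ℚ) / (Nat.factorial (n - i)) * stirling1 (n - i) k)
                * ((-1:ℚ)^(i+1+j) / ((i:ℚ) - (j:ℚ)))) * Xv N j := by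
      intro i hi
      rw [Finset.mem_range] at hi
      rw [← MvPolynomial.smul_eq_C_mul, map_smul, DK2_X N i (by omega), Finset.smul_sum]
      apply Finset.sum_congr rfl
      intro j _
      rw [MvPolynomial.smul_eq_C_mul, ← mul_assoc, ← map_mul]
    rw [Finset.sum_congr rfl step]
    rw [Finset.sum_comm' (t' := Finset.range (n + 1 - k))
      (s' := fun j => Finset.Ico (j+1) (n + 1 - k))
      (by intro x y; simp only [Finset.mem_range, Finset.mem_Ico]; omega)]
    have hidx : n + 1 - (k + 1) = n - k := by omega
    rw [hidx]
    rw [← Finset.sum_subset (Finset.range_subset_range.mpr (by omega : n - k ≤ n + 1 - k))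
      (by
        intro j hj hj'
        rw [Finset.mem_range] at hj hj'
        rw [Finset.Ico_eq_empty (by omega : ¬ j + 1 < n + 1 - k), Finset.sum_empty])]
    apply Finset.sum_congr rfl
    intro j hj
    rw [Finset.mem_range] at hj
    rw [← Finset.sum_mul, ← map_sum]
    congr 1
    have hext : ∑ i ∈ Finset.Ico (j+1) (n + 1 - k),
        ((Nat.factorial k : ℚ) / (Nat.factorial (n - i)) * stirling1 (n - i) k)
          * ((-1:ℚ)^(i+1+j) / ((i:ℚ) - (j:ℚ)))
        = ∑ i ∈ Finset.Ico (j+1) (n+1),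
          ((Nat.factorial k : ℚ) / (Nat.factorial (n - i)) * stirling1 (n - i) k)
            * ((-1:ℚ)^(i+1+j) / ((i:ℚ) - (j:ℚ))) := by
      apply Finset.sum_subset (Finset.Ico_subset_Ico le_rfl (by omega))
      intro i hi hi'
      rw [Finset.mem_Ico] at hi hi'
      rw [stirling1_eq_zero (by omega : n - i < k), mul_zero, zero_mul]
    rw [hext, key n k j (by omega)]
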